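/- For every real parameter λ ≥ 1, the map ϱ^(λ) is admissible with the linear order ≤_XY: for all α, β, γ ∈ Ĩ with α ≤_XY β ≤_XY γ, one has ϱ^(λ)(α, β) ≤ ϱ^(λ)(α, γ) and ϱ^(λ)(β, γ) ≤ ϱ^(λ)(α, γ). -/

import Mathlib

/-- The set of intuitionistic fuzzy values (IFVs). -/
def Itilde : Set (ℝ × ℝ) :=
  {p | 0 ≤ p.1 ∧ p.1 ≤ 1 ∧ 0 ≤ p.2 ∧ p.2 ≤ 1 ∧ p.1 + p.2 ≤ 1}

/-- Score degree `s(α) = μ_α - ν_α`. -/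
def score (p : ℝ × ℝ) : ℝ := p.1 - p.2

/-- Accuracy degree `h(α) = μ_α + ν_α`. -/
def accuracy (p : ℝ × ℝ) : ℝ := p.1 + p.2

/-- The parametric distance measure `ϱ^(λ)`. -/
noncomputable def vrhoL (l : ℝ) (a b : ℝ × ℝ) : ℝ :=
  if score a ≠ score b then (1 + l * |score a - score b|) / (1 + 2 * l)
  else |accuracy a - accuracy b| / (1 + 2 * l)

/-- The Xu–Yager linear order `≤_XY`. -/
def xyLE (a b : ℝ × ℝ) : Prop :=
  score a < score b ∨ (score a = score b ∧ accuracy a ≤ accuracy b)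

/-!
Under `≤_XY` the chain `α ≤ β ≤ γ` either keeps all scores equal, where `ϱ^(λ)` is a multiple of
the accuracy gap, or separates some scores, where it is an increasing function of the score gap.
The mixed comparisons hold because a distance between IFVs of equal score is at most
`1/(1 + 2λ)`, the accuracies lying in `[0, 1]`, while a distance between IFVs of different score is
at least that.
-/

lemma abs_sub_le_abs_sub_of_le_of_le {x y z : ℝ} (hxy : x ≤ y) (hyz : y ≤ z) :
    |x - y| ≤ |x - z| ∧ |y - z| ≤ |x - z| := by
  rw [abs_of_nonpos (by linarith), abs_of_nonpos (by linarith), abs_of_nonpos (by linarith)]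
  constructor <;> linarith

lemma accuracy_mem_Icc {p : ℝ × ℝ} (hp : p ∈ Itilde) : accuracy p ∈ Set.Icc 0 1 := by
  obtain ⟨hμ, -, hν, -, hsum⟩ := hp
  exact ⟨add_nonneg hμ hν, hsum⟩

lemma abs_accuracy_sub_le_one {p q : ℝ × ℝ} (hp : p ∈ Itilde) (hq : q ∈ Itilde) :
    |accuracy p - accuracy q| ≤ 1 := by
  obtain ⟨hp0, hp1⟩ := accuracy_mem_Icc hp
  obtain ⟨hq0, hq1⟩ := accuracy_mem_Icc hq
  exact abs_le.mpr ⟨by linarith, by linarith⟩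

lemma score_le_of_xyLE {a b : ℝ × ℝ} (h : xyLE a b) : score a ≤ score b :=
  h.elim le_of_lt fun h => h.1.le

section vrhoL

variable {l : ℝ} {a b c d : ℝ × ℝ}

lemma vrhoL_of_score_ne (h : score a ≠ score b) :
    vrhoL l a b = (1 + l * |score a - score b|) / (1 + 2 * l) :=
  if_pos h

lemma vrhoL_of_score_eq (h : score a = score b) :
    vrhoL l a b = |accuracy a - accuracy b| / (1 + 2 * l) :=
  if_neg (not_not_intro h)

lemma vrhoL_le_vrhoL_of_score_eq (hl : 0 ≤ l) (hab : score a = score b) (hcd : score c = score d)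
    (h : |accuracy a - accuracy b| ≤ |accuracy c - accuracy d|) : vrhoL l a b ≤ vrhoL l c d := by
  rw [vrhoL_of_score_eq hab, vrhoL_of_score_eq hcd]
  gcongr

lemma vrhoL_le_vrhoL_of_score_ne (hl : 0 ≤ l) (hab : score a ≠ score b) (hcd : score c ≠ score d)
    (h : |score a - score b| ≤ |score c - score d|) : vrhoL l a b ≤ vrhoL l c d := by
  rw [vrhoL_of_score_ne hab, vrhoL_of_score_ne hcd]
  gcongr

lemma vrhoL_le_vrhoL_of_score_eq_of_score_ne (hl : 0 ≤ l) (ha : a ∈ Itilde) (hb : b ∈ Itilde)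
    (hab : score a = score b) (hcd : score c ≠ score d) : vrhoL l a b ≤ vrhoL l c d := by
  rw [vrhoL_of_score_eq hab, vrhoL_of_score_ne hcd]
  have : |accuracy a - accuracy b| ≤ 1 + l * |score c - score d| := by
    linarith [abs_accuracy_sub_le_one ha hb, mul_nonneg hl (abs_nonneg (score c - score d))]
  gcongr

end vrhoL

/-- For ,  is admissible with : if , then
 and . -/
theorem vrhoL_admissible_xy (l : ℝ) (hl : 1 ≤ l) (a b c : ℝ × ℝ)
    (ha : a ∈ Itilde) (hb : b ∈ Itilde) (hc : c ∈ Itilde)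
    (hab : xyLE a b) (hbc : xyLE b c) :
    vrhoL l a b ≤ vrhoL l a c ∧ vrhoL l b c ≤ vrhoL l a c := by
  have hl0 : 0 ≤ l := zero_le_one.trans hl
  obtain ⟨hsab, hsbc⟩ := abs_sub_le_abs_sub_of_le_of_le (score_le_of_xyLE hab)
    (score_le_of_xyLE hbc)
  rcases hab with h₁ | ⟨h₁, h₁'⟩ <;> rcases hbc with h₂ | ⟨h₂, h₂'⟩
  · have h₃ := (h₁.trans h₂).ne
    exact ⟨vrhoL_le_vrhoL_of_score_ne hl0 h₁.ne h₃ hsab,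
      vrhoL_le_vrhoL_of_score_ne hl0 h₂.ne h₃ hsbc⟩
  · have h₃ := (h₂ ▸ h₁).ne
    exact ⟨vrhoL_le_vrhoL_of_score_ne hl0 h₁.ne h₃ hsab,
      vrhoL_le_vrhoL_of_score_eq_of_score_ne hl0 hb hc h₂ h₃⟩
  · have h₃ := (h₁ ▸ h₂).ne
    exact ⟨vrhoL_le_vrhoL_of_score_eq_of_score_ne hl0 ha hb h₁ h₃,
      vrhoL_le_vrhoL_of_score_ne hl0 h₂.ne h₃ hsbc⟩
  · obtain ⟨hhab, hhbc⟩ := abs_sub_le_abs_sub_of_le_of_le h₁' h₂'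
    exact ⟨vrhoL_le_vrhoL_of_score_eq hl0 h₁ (h₁.trans h₂) hhab,
      vrhoL_le_vrhoL_of_score_eq hl0 h₂ (h₁.trans h₂) hhbc⟩
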